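/- Let γ₁, γ₂ ∈ (-1, -1/2) with γ₁ + γ₂ > -3/2, let A ∈ ℝ, and define g(x,y) = (A/2)·(x₊^{γ₁} y₊^{γ₂} + x₊^{γ₂} y₊^{γ₁}). Then 2 · ∫_{[0,1]²} ∫_{ℝ²} g(s₁-x₁, s₁-x₂) g(s₂-x₂, s₂-x₁) dx₁dx₂ ds₁ds₂ = μ₂(γ₁,γ₂), where μ₂(γ₁,γ₂) = A² / ((γ₁+γ₂+2)(2(γ₁+γ₂)+3)) · [B(γ₁+1, -γ₁-γ₂-1)·B(γ₂+1, -γ₁-γ₂-1) + B(γ₁+1, -2γ₁-1)·B(γ₂+1, -2γ₂-1)]. (This quantity μ₂(γ₁,γ₂) is the second moment of the generalized Rosenblatt distribution Z_{γ₁,γ₂}(1).) -/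

import Mathlib

/-!
Expanding both kernels, the integrand over `(x₁, x₂)` is a sum of four products `f(x₁) h(x₂)`,
each factor of the form `x ↦ (s₁ - x)₊^α (s₂ - x)₊^β`. For `s < t` the substitution
`x = t - (t - s)/v`, `v ∈ (0, 1)`, turns `∫ (s - x)₊^α (t - x)₊^β dx` into
`B(α + 1, -α - β - 1) (t - s)^(α + β + 1)`, so the integral over `ℝ²` equals
`(A²/2) μ · |s₁ - s₂|^δ` with `δ = 2(γ₁ + γ₂) + 2 > -1`, where `μ` is the sum of Beta products.
It remains to use `∫∫_{[0,1]²} |s - t|^δ = 2/((δ + 1)(δ + 2))`.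
-/

open MeasureTheory

/-- The Euler beta function `B(x,y) = Γ(x)Γ(y)/Γ(x+y)`. -/
noncomputable def eulerBeta (x y : ℝ) : ℝ := Real.Gamma x * Real.Gamma y / Real.Gamma (x + y)

/-- The generalized Rosenblatt kernel
`g(x,y) = (A/2) (x₊^{γ₁} y₊^{γ₂} + x₊^{γ₂} y₊^{γ₁})`. -/
noncomputable def genRosenblattKernel (A γ₁ γ₂ : ℝ) (x y : ℝ) : ℝ :=
  A / 2 * ((max x 0) ^ γ₁ * (max y 0) ^ γ₂ + (max x 0) ^ γ₂ * (max y 0) ^ γ₁)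

lemma eulerBeta_comm (a b : ℝ) : eulerBeta a b = eulerBeta b a := by
  rw [eulerBeta, eulerBeta, mul_comm, add_comm]

lemma eulerBeta_pos {a b : ℝ} (ha : 0 < a) (hb : 0 < b) : 0 < eulerBeta a b :=
  ProbabilityTheory.beta_pos ha hb

lemma integral_Ioo_rpow_mul_one_sub_rpow {a b : ℝ} (ha : 0 < a) (hb : 0 < b) :
    ∫ x in Set.Ioo (0 : ℝ) 1, x ^ (a - 1) * (1 - x) ^ (b - 1) = eulerBeta a b := by
  have hcomplex : Complex.betaIntegral a b
      = ((∫ x in Set.Ioo (0 : ℝ) 1, x ^ (a - 1) * (1 - x) ^ (b - 1) : ℝ) : ℂ) := by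
    rw [Complex.betaIntegral, intervalIntegral.integral_of_le zero_le_one,
      integral_Ioc_eq_integral_Ioo, ← integral_complex_ofReal]
    refine setIntegral_congr_fun measurableSet_Ioo fun x hx => ?_
    push_cast [Complex.ofReal_cpow hx.1.le, Complex.ofReal_cpow (sub_nonneg.2 hx.2.le)]
    rfl
  apply Complex.ofReal_injective
  rw [← hcomplex, Complex.betaIntegral_eq_Gamma_mul_div _ _ (by simpa) (by simpa), eulerBeta,
    ← Complex.ofReal_add, Complex.Gamma_ofReal, Complex.Gamma_ofReal, Complex.Gamma_ofReal]
  push_cast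
  rfl

noncomputable def pairKernel (α β s t x : ℝ) : ℝ := max (s - x) 0 ^ α * max (t - x) 0 ^ β

lemma pairKernel_swap (α β s t x : ℝ) : pairKernel α β s t x = pairKernel β α t s x :=
  mul_comm _ _

lemma pairKernel_eq_zero_of_le {α β s t x : ℝ} (hα : α ≠ 0) (hx : s ≤ x) :
    pairKernel α β s t x = 0 := by
  rw [pairKernel, max_eq_right (sub_nonpos.2 hx), Real.zero_rpow hα, zero_mul]

section Substitution

variable {s t : ℝ}

lemma image_sub_div_Ioo (hst : s < t) :
    (fun v => t - (t - s) / v) '' Set.Ioo 0 1 = Set.Iio s := by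
  have hc : 0 < t - s := sub_pos.2 hst
  ext x
  constructor
  · rintro ⟨v, ⟨hv0, hv1⟩, rfl⟩
    have : t - s < (t - s) / v := (lt_div_iff₀ hv0).2 (by nlinarith)
    simp only [Set.mem_Iio]
    linarith
  · intro hx
    have htx : 0 < t - x := by simp only [Set.mem_Iio] at hx; linarith
    refine ⟨(t - s) / (t - x), ⟨div_pos hc htx, (div_lt_one htx).2 (by linarith [hx.out])⟩, ?_⟩
    field_simp
    ring

lemma hasDerivAt_sub_div (c : ℝ) {v : ℝ} (hv : v ≠ 0) :
    HasDerivAt (fun v => t - c / v) (c / v ^ 2) v := by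
  simpa [div_eq_mul_inv, neg_div] using ((hasDerivAt_inv hv).const_mul c).const_sub t

lemma injOn_sub_div (hst : s < t) : Set.InjOn (fun v => t - (t - s) / v) (Set.Ioo 0 1) := by
  intro v hv w hw h
  have hc : t - s ≠ 0 := (sub_pos.2 hst).ne'
  have h' : (t - s) / v = (t - s) / w := sub_right_injective h
  rwa [div_eq_div_iff hv.1.ne' hw.1.ne', mul_right_inj' hc, eq_comm] at h'

lemma abs_deriv_smul_pairKernel_sub_div {α β v : ℝ} (hst : s < t) (hv : v ∈ Set.Ioo (0 : ℝ) 1) :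
    |(t - s) / v ^ 2| • pairKernel α β s t (t - (t - s) / v)
      = (t - s) ^ (α + β + 1) * (v ^ ((-α - β - 1) - 1) * (1 - v) ^ ((α + 1) - 1)) := by
  obtain ⟨hv0, hv1⟩ := hv
  have hc : 0 < t - s := sub_pos.2 hst
  have h1v : 0 < 1 - v := sub_pos.2 hv1
  have hleft : s - (t - (t - s) / v) = (t - s) * (1 - v) / v := by field_simp; ring
  have hright : t - (t - (t - s) / v) = (t - s) / v := by ring
  have hcpow : (t - s) ^ (α + β + 1) = (t - s) ^ α * (t - s) ^ β * (t - s) := by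
    rw [Real.rpow_add hc, Real.rpow_add hc, Real.rpow_one]
  have hvpow : v ^ ((-α - β - 1) - 1) = (v ^ α * v ^ β * v ^ 2)⁻¹ := by
    rw [← Real.rpow_natCast, ← Real.rpow_add hv0, ← Real.rpow_add hv0, ← Real.rpow_neg hv0.le]
    norm_num
    ring_nf
  rw [pairKernel, hleft, hright, max_eq_left (by positivity), max_eq_left (by positivity),
    smul_eq_mul, abs_of_pos (by positivity), Real.div_rpow (by positivity) hv0.le,
    Real.div_rpow hc.le hv0.le, Real.mul_rpow hc.le h1v.le, hcpow, hvpow, add_sub_cancel_right]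
  field_simp

end Substitution

section PairKernel

variable {α β s t : ℝ}

lemma integral_pairKernel_of_lt (hα : -1 < α) (hβ : -1 < β) (hαβ : α + β < -1) (hst : s < t) :
    ∫ x, pairKernel α β s t x = eulerBeta (α + 1) (-α - β - 1) * (t - s) ^ (α + β + 1) := by
  rw [← setIntegral_eq_integral_of_forall_compl_eq_zero (s := Set.Iio s)
      fun x hx => pairKernel_eq_zero_of_le (by linarith) (not_lt.1 hx),
    ← image_sub_div_Ioo hst,
    integral_image_eq_integral_abs_deriv_smul measurableSet_Ioo
      (fun v hv => (hasDerivAt_sub_div _ hv.1.ne').hasDerivWithinAt) (injOn_sub_div hst),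
    setIntegral_congr_fun measurableSet_Ioo fun v hv => abs_deriv_smul_pairKernel_sub_div hst hv,
    integral_const_mul, integral_Ioo_rpow_mul_one_sub_rpow (by linarith) (by linarith),
    eulerBeta_comm, mul_comm]

lemma integral_pairKernel_of_gt (hα : -1 < α) (hβ : -1 < β) (hαβ : α + β < -1) (hts : t < s) :
    ∫ x, pairKernel α β s t x = eulerBeta (β + 1) (-α - β - 1) * (s - t) ^ (α + β + 1) := by
  simp_rw [pairKernel_swap α β s t]
  rw [integral_pairKernel_of_lt hβ hα (by linarith) hts, add_comm β α,
    show -β - α - 1 = -α - β - 1 by ring]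

lemma integral_pairKernel_pos (hα : -1 < α) (hβ : -1 < β) (hαβ : α + β < -1) (hst : s ≠ t) :
    0 < ∫ x, pairKernel α β s t x := by
  rcases hst.lt_or_gt with h | h
  · rw [integral_pairKernel_of_lt hα hβ hαβ h]
    exact mul_pos (eulerBeta_pos (by linarith) (by linarith)) (Real.rpow_pos_of_pos (by linarith) _)
  · rw [integral_pairKernel_of_gt hα hβ hαβ h]
    exact mul_pos (eulerBeta_pos (by linarith) (by linarith)) (Real.rpow_pos_of_pos (by linarith) _)

lemma integrable_pairKernel (hα : -1 < α) (hβ : -1 < β) (hαβ : α + β < -1) (hst : s ≠ t) :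
    Integrable (pairKernel α β s t) :=
  Integrable.of_integral_ne_zero (integral_pairKernel_pos hα hβ hαβ hst).ne'

lemma integral_pairKernel_self (hα : -1 < α) (hα' : α < -1 / 2) (hst : s ≠ t) :
    ∫ x, pairKernel α α s t x = eulerBeta (α + 1) (-2 * α - 1) * |s - t| ^ (2 * α + 1) := by
  have hαα : α + α < -1 := by linarith
  rcases hst.lt_or_gt with h | h
  · rw [integral_pairKernel_of_lt hα hα hαα h, abs_sub_comm, abs_of_pos (sub_pos.2 h)]
    ring_nf
  · rw [integral_pairKernel_of_gt hα hα hαα h, abs_of_pos (sub_pos.2 h)]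
    ring_nf

lemma integral_pairKernel_mul_integral_pairKernel_swap (hα : -1 < α) (hβ : -1 < β)
    (hαβ : α + β < -1) (hst : s ≠ t) :
    (∫ x, pairKernel α β s t x) * ∫ x, pairKernel β α s t x
      = eulerBeta (α + 1) (-α - β - 1) * eulerBeta (β + 1) (-α - β - 1)
        * |s - t| ^ (2 * (α + β) + 2) := by
  have hβα : β + α < -1 := by linarith
  have hexp : 2 * (α + β) + 2 = (α + β + 1) + (α + β + 1) := by ring
  rcases hst.lt_or_gt with h | h
  · rw [integral_pairKernel_of_lt hα hβ hαβ h, integral_pairKernel_of_lt hβ hα hβα h,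
      abs_sub_comm, abs_of_pos (sub_pos.2 h), hexp, Real.rpow_add (sub_pos.2 h) (α + β + 1),
      add_comm β α, show -β - α - 1 = -α - β - 1 by ring]
    ring
  · rw [integral_pairKernel_of_gt hα hβ hαβ h, integral_pairKernel_of_gt hβ hα hβα h,
      abs_of_pos (sub_pos.2 h), hexp, Real.rpow_add (sub_pos.2 h) (α + β + 1),
      add_comm β α, show -β - α - 1 = -α - β - 1 by ring]
    ring

end PairKernel

lemma integral_integral_sum_mul {X Y ι 𝕜 : Type*} [RCLike 𝕜] [MeasurableSpace X]
    [MeasurableSpace Y] {μ : Measure X} {ν : Measure Y} (I : Finset ι) {f : ι → X → 𝕜}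
    {g : ι → Y → 𝕜} (hf : ∀ i ∈ I, Integrable (f i) μ) (hg : ∀ i ∈ I, Integrable (g i) ν) :
    ∫ x, ∫ y, ∑ i ∈ I, f i x * g i y ∂ν ∂μ = ∑ i ∈ I, (∫ x, f i x ∂μ) * ∫ y, g i y ∂ν := by
  calc ∫ x, ∫ y, ∑ i ∈ I, f i x * g i y ∂ν ∂μ
      = ∫ x, ∑ i ∈ I, f i x * ∫ y, g i y ∂ν ∂μ := by
        congr 1 with x
        rw [integral_finsetSum I fun i hi => (hg i hi).const_mul _]
        simp only [integral_const_mul]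
    _ = ∑ i ∈ I, (∫ x, f i x ∂μ) * ∫ y, g i y ∂ν := by
        rw [integral_finsetSum I fun i hi => (hf i hi).mul_const _]
        simp only [integral_mul_const]

lemma genRosenblattKernel_mul_eq_sum (A γ₁ γ₂ s₁ s₂ x₁ x₂ : ℝ) :
    genRosenblattKernel A γ₁ γ₂ (s₁ - x₁) (s₁ - x₂) *
        genRosenblattKernel A γ₁ γ₂ (s₂ - x₂) (s₂ - x₁)
      = (A / 2) ^ 2 * ∑ i : Fin 4,
          ![pairKernel γ₁ γ₂ s₁ s₂, pairKernel γ₁ γ₁ s₁ s₂, pairKernel γ₂ γ₂ s₁ s₂,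
            pairKernel γ₂ γ₁ s₁ s₂] i x₁ *
          ![pairKernel γ₂ γ₁ s₁ s₂, pairKernel γ₂ γ₂ s₁ s₂, pairKernel γ₁ γ₁ s₁ s₂,
            pairKernel γ₁ γ₂ s₁ s₂] i x₂ := by
  simp only [Fin.sum_univ_four, Matrix.cons_val, genRosenblattKernel, pairKernel]
  ring

lemma integral_integral_genRosenblattKernel_mul {A γ₁ γ₂ s₁ s₂ : ℝ}
    (h1 : γ₁ ∈ Set.Ioo (-1 : ℝ) (-1/2)) (h2 : γ₂ ∈ Set.Ioo (-1 : ℝ) (-1/2)) (hs : s₁ ≠ s₂) :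
    ∫ x₁, ∫ x₂, genRosenblattKernel A γ₁ γ₂ (s₁ - x₁) (s₁ - x₂) *
        genRosenblattKernel A γ₁ γ₂ (s₂ - x₂) (s₂ - x₁)
      = A ^ 2 / 2 *
          (eulerBeta (γ₁ + 1) (-γ₁ - γ₂ - 1) * eulerBeta (γ₂ + 1) (-γ₁ - γ₂ - 1) +
            eulerBeta (γ₁ + 1) (-2 * γ₁ - 1) * eulerBeta (γ₂ + 1) (-2 * γ₂ - 1)) *
          |s₁ - s₂| ^ (2 * (γ₁ + γ₂) + 2) := by
  obtain ⟨h1l, h1r⟩ := h1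
  obtain ⟨h2l, h2r⟩ := h2
  simp_rw [genRosenblattKernel_mul_eq_sum, integral_const_mul]
  rw [integral_integral_sum_mul _
    (fun i _ => by fin_cases i <;>
      exact integrable_pairKernel (by linarith) (by linarith) (by linarith) hs)
    (fun i _ => by fin_cases i <;>
      exact integrable_pairKernel (by linarith) (by linarith) (by linarith) hs),
    Fin.sum_univ_four]
  simp only [Matrix.cons_val]
  rw [integral_pairKernel_mul_integral_pairKernel_swap h1l h2l (by linarith) hs,
    integral_pairKernel_mul_integral_pairKernel_swap h2l h1l (by linarith) hs,
    integral_pairKernel_self h1l h1r hs, integral_pairKernel_self h2l h2r hs,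
    add_comm γ₂ γ₁, show -γ₂ - γ₁ - 1 = -γ₁ - γ₂ - 1 by ring]
  have hexp : |s₁ - s₂| ^ (2 * γ₁ + 1) * |s₁ - s₂| ^ (2 * γ₂ + 1)
      = |s₁ - s₂| ^ (2 * (γ₁ + γ₂) + 2) := by
    rw [← Real.rpow_add (abs_pos.2 (sub_ne_zero.2 hs))]
    ring_nf
  linear_combination (A / 2) ^ 2 * 2 * eulerBeta (γ₁ + 1) (-2 * γ₁ - 1) *
    eulerBeta (γ₂ + 1) (-2 * γ₂ - 1) * hexp

lemma integral_abs_sub_rpow {δ a s b : ℝ} (hδ : -1 < δ) (has : a ≤ s) (hsb : s ≤ b) :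
    ∫ t in a..b, |s - t| ^ δ = ((s - a) ^ (δ + 1) + (b - s) ^ (δ + 1)) / (δ + 1) := by
  have hleft : Set.EqOn (fun t => |s - t| ^ δ) (fun t => (s - t) ^ δ) (Set.uIcc a s) :=
    fun t ht => by
      rw [Set.uIcc_of_le has] at ht
      simp only [abs_of_nonneg (sub_nonneg.2 ht.2)]
  have hright : Set.EqOn (fun t => |s - t| ^ δ) (fun t => (t - s) ^ δ) (Set.uIcc s b) :=
    fun t ht => by
      rw [Set.uIcc_of_le hsb] at ht
      simp only [abs_sub_comm s t, abs_of_nonneg (sub_nonneg.2 ht.1)]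
  have hpow (c d : ℝ) : IntervalIntegrable (fun u : ℝ => u ^ δ) volume c d :=
    intervalIntegral.intervalIntegrable_rpow' hδ
  have hδ1 : δ + 1 ≠ 0 := by linarith
  have h1 : IntervalIntegrable (fun t => |s - t| ^ δ) volume a s := by
    refine (intervalIntegrable_congr (hleft.mono Set.uIoc_subset_uIcc)).2 ?_
    simpa using (hpow (s - a) 0).comp_sub_left s
  have h2 : IntervalIntegrable (fun t => |s - t| ^ δ) volume s b := by
    refine (intervalIntegrable_congr (hright.mono Set.uIoc_subset_uIcc)).2 ?_
    simpa using (hpow 0 (b - s)).comp_sub_right s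
  rw [← intervalIntegral.integral_add_adjacent_intervals h1 h2,
    intervalIntegral.integral_congr hleft, intervalIntegral.integral_congr hright,
    intervalIntegral.integral_comp_sub_left (fun u => u ^ δ),
    intervalIntegral.integral_comp_sub_right (fun u => u ^ δ), integral_rpow (Or.inl hδ),
    integral_rpow (Or.inl hδ), sub_self, Real.zero_rpow hδ1, sub_zero, sub_zero, add_div]

lemma integral_Icc_integral_Icc_abs_sub_rpow {δ : ℝ} (hδ : -1 < δ) :
    ∫ s in Set.Icc (0 : ℝ) 1, ∫ t in Set.Icc (0 : ℝ) 1, |s - t| ^ δ = 2 / ((δ + 1) * (δ + 2)) := by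
  have hinner : ∀ s ∈ Set.Icc (0 : ℝ) 1,
      ∫ t in Set.Icc (0 : ℝ) 1, |s - t| ^ δ = (s ^ (δ + 1) + (1 - s) ^ (δ + 1)) / (δ + 1) :=
    fun s hs => by
      rw [integral_Icc_eq_integral_Ioc, ← intervalIntegral.integral_of_le zero_le_one,
        integral_abs_sub_rpow hδ hs.1 hs.2, sub_zero]
  have hpow : IntervalIntegrable (fun u : ℝ => u ^ (δ + 1)) volume 0 1 :=
    intervalIntegral.intervalIntegrable_rpow' (by linarith)
  have hδ1 : δ + 1 ≠ 0 := by linarith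
  have hδ2 : δ + 2 ≠ 0 := by linarith
  rw [setIntegral_congr_fun measurableSet_Icc hinner, integral_Icc_eq_integral_Ioc,
    ← intervalIntegral.integral_of_le zero_le_one, intervalIntegral.integral_div,
    intervalIntegral.integral_add hpow (by simpa using (hpow.comp_sub_left 1).symm),
    intervalIntegral.integral_comp_sub_left (fun u => u ^ (δ + 1)), sub_self, sub_zero,
    integral_rpow (Or.inl (by linarith)), Real.one_rpow, add_assoc, one_add_one_eq_two,
    Real.zero_rpow hδ2]
  field_simp
  ring

/-- The second-moment formula for the generalized Rosenblatt distribution: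
`2 ∫_{[0,1]²} ∫_{ℝ²} g(s₁-x₁,s₁-x₂) g(s₂-x₂,s₂-x₁) dx ds = μ₂(γ₁,γ₂)`, where
`μ₂(γ₁,γ₂) = A²/((γ₁+γ₂+2)(2(γ₁+γ₂)+3)) ·
  [B(γ₁+1,-γ₁-γ₂-1) B(γ₂+1,-γ₁-γ₂-1) + B(γ₁+1,-2γ₁-1) B(γ₂+1,-2γ₂-1)]`. -/
theorem second_moment_genRosenblatt
    (γ₁ γ₂ : ℝ) (h1 : γ₁ ∈ Set.Ioo (-1 : ℝ) (-1/2)) (h2 : γ₂ ∈ Set.Ioo (-1 : ℝ) (-1/2))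
    (hsum : γ₁ + γ₂ > -3/2) (A : ℝ) :
    2 * (∫ s₁ in Set.Icc (0 : ℝ) 1, ∫ s₂ in Set.Icc (0 : ℝ) 1, ∫ x₁ : ℝ, ∫ x₂ : ℝ,
          genRosenblattKernel A γ₁ γ₂ (s₁ - x₁) (s₁ - x₂) *
            genRosenblattKernel A γ₁ γ₂ (s₂ - x₂) (s₂ - x₁))
      = A ^ 2 / ((γ₁ + γ₂ + 2) * (2 * (γ₁ + γ₂) + 3)) *
          (eulerBeta (γ₁ + 1) (-γ₁ - γ₂ - 1) * eulerBeta (γ₂ + 1) (-γ₁ - γ₂ - 1) +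
            eulerBeta (γ₁ + 1) (-2 * γ₁ - 1) * eulerBeta (γ₂ + 1) (-2 * γ₂ - 1)) := by
  have hδ : -1 < 2 * (γ₁ + γ₂) + 2 := by linarith
  have hkernel (s₁ : ℝ) : (fun s₂ => ∫ x₁ : ℝ, ∫ x₂ : ℝ,
      genRosenblattKernel A γ₁ γ₂ (s₁ - x₁) (s₁ - x₂) *
        genRosenblattKernel A γ₁ γ₂ (s₂ - x₂) (s₂ - x₁))
      =ᵐ[volume.restrict (Set.Icc 0 1)] fun s₂ => A ^ 2 / 2 *
          (eulerBeta (γ₁ + 1) (-γ₁ - γ₂ - 1) * eulerBeta (γ₂ + 1) (-γ₁ - γ₂ - 1) +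
            eulerBeta (γ₁ + 1) (-2 * γ₁ - 1) * eulerBeta (γ₂ + 1) (-2 * γ₂ - 1)) *
          |s₁ - s₂| ^ (2 * (γ₁ + γ₂) + 2) := by
    refine ae_restrict_of_ae ?_
    filter_upwards [measure_eq_zero_iff_ae_notMem.1 (measure_singleton s₁)] with s₂ hs₂
    exact integral_integral_genRosenblattKernel_mul h1 h2 (Ne.symm hs₂)
  simp_rw [integral_congr_ae (hkernel _), integral_const_mul,
    integral_Icc_integral_Icc_abs_sub_rpow hδ]
  rw [show (2 * (γ₁ + γ₂) + 2 + 1) * (2 * (γ₁ + γ₂) + 2 + 2)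
      = 2 * ((γ₁ + γ₂ + 2) * (2 * (γ₁ + γ₂) + 3)) by ring]
  field_simp
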